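/- arXiv:1611.02012 — 3 statements merged into one kernel-verified Lean document; each statement's English description precedes it below -/
import Mathlib

section
/- The subgroup of the symmetric group S_{2n} consisting of permutations π that preserve both the pairing B = {{1,2},{3,4},...,{2n-1,2n}} and the pairing W = {{2,3},{4,5},...,{2n,1}} has exactly 2n elements. -/
/-!
Together the two pairings form the `2n`-cycle `k — k + 1`, whose edges are coloured by the
parity of `k`. A permutation preserving both pairings is therefore determined by the image of
`0`: walking along the cycle, the image of `k + 1` is the unique partner of the image of `k` in
the pairing that contains `{k, k + 1}`. Conversely every `c` is the image of `0` under such a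
permutation: the translation `k ↦ k + c` if `c` is even, the reflection `k ↦ c - k` if `c` is
odd. Hence `π ↦ π 0` is a bijection onto `Fin (2n)`.
-/

noncomputable section

lemma sym2_map_mul {β : Type*} (a b : Equiv.Perm β) (p : Sym2 β) :
    Sym2.map (a * b : Equiv.Perm β) p = Sym2.map a (Sym2.map b p) := by
  induction p using Sym2.ind with
  | _ x y => simp [Equiv.Perm.mul_apply]

/-- The permutations `π` of the edge-sides leaving invariant both pairings `I`
and `J` (in the sense that `{a,b} ∈ I ↔ {π a, π b} ∈ I` and likewise for `J`)
form a subgroup of the symmetric group. -/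
def preservedSubgroup {β : Type*} (I J : Set (Sym2 β)) : Subgroup (Equiv.Perm β) where
  carrier := {π | (∀ p, p ∈ I ↔ Sym2.map π p ∈ I) ∧ (∀ p, p ∈ J ↔ Sym2.map π p ∈ J)}
  one_mem' := by constructor <;> intro p <;> simp
  mul_mem' := by
    rintro a b ⟨ha1, ha2⟩ ⟨hb1, hb2⟩
    constructor <;> intro p
    · exact (hb1 p).trans ((ha1 _).trans (by rw [sym2_map_mul]))
    · exact (hb2 p).trans ((ha2 _).trans (by rw [sym2_map_mul]))
  inv_mem' := by
    rintro a ⟨ha1, ha2⟩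
    constructor <;> intro p
    · have := (ha1 (Sym2.map (a⁻¹ : Equiv.Perm _) p)).symm
      rw [← sym2_map_mul, mul_inv_cancel] at this
      simpa using this
    · have := (ha2 (Sym2.map (a⁻¹ : Equiv.Perm _) p)).symm
      rw [← sym2_map_mul, mul_inv_cancel] at this
      simpa using this

/-- The pairing of the edge-sides of the standard `2n`-gon (sides labelled
cyclically by `Fin (2n)`) which share a corner at a black vertex. -/
def polygonB (n : ℕ) : Set (Sym2 (Fin (2 * n))) :=
  {p | ∃ k : Fin (2 * n), Even k.val ∧ p = s(k, finRotate (2 * n) k)}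

/-- The pairing of the edge-sides of the standard `2n`-gon which share a corner
at a white vertex. -/
def polygonW (n : ℕ) : Set (Sym2 (Fin (2 * n))) :=
  {p | ∃ k : Fin (2 * n), ¬ Even k.val ∧ p = s(k, finRotate (2 * n) k)}

open scoped Fin.CommRing
open Set

theorem ZMod.val_finEquiv (N : ℕ) [NeZero N] (k : Fin N) : (ZMod.finEquiv N k).val = k.val := by
  obtain ⟨m, rfl⟩ := Nat.exists_eq_succ_of_ne_zero (NeZero.ne N)
  rfl

def Fin.parity {N : ℕ} [NeZero N] (h : 2 ∣ N) : Fin N →+* ZMod 2 :=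
  (ZMod.castHom h (ZMod 2)).comp (ZMod.finEquiv N).toRingHom

theorem Fin.parity_apply {N : ℕ} [NeZero N] (h : 2 ∣ N) (k : Fin N) :
    Fin.parity h k = k.val := by
  rw [Fin.parity, RingHom.comp_apply, ZMod.castHom_apply, ZMod.cast_eq_val,
    RingEquiv.toRingHom_eq_coe, RingEquiv.coe_toRingHom, ZMod.val_finEquiv]

theorem ZMod.eq_zero_or_eq_one (e : ZMod 2) : e = 0 ∨ e = 1 := by
  revert e; decide

theorem Sym2.map_mem_iff_of_mapsTo {β : Type*} [Finite β] {I : Set (Sym2 β)}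
    {π : Equiv.Perm β} (h : MapsTo (Sym2.map π) I I) (p : Sym2 β) :
    p ∈ I ↔ Sym2.map π p ∈ I := by
  have hbij := (I.toFinite.injOn_iff_bijOn_of_mapsTo h).mp
    (Sym2.map.injective π.injective).injOn
  refine ⟨fun hp => h hp, fun hp => ?_⟩
  obtain ⟨q, hq, hqp⟩ := hbij.surjOn hp
  rwa [← Sym2.map.injective π.injective hqp]

theorem mem_preservedSubgroup_of_mapsTo {β : Type*} [Finite β] {I J : Set (Sym2 β)}
    {π : Equiv.Perm β} (hI : MapsTo (Sym2.map π) I I) (hJ : MapsTo (Sym2.map π) J J) :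
    π ∈ preservedSubgroup I J :=
  ⟨Sym2.map_mem_iff_of_mapsTo hI, Sym2.map_mem_iff_of_mapsTo hJ⟩

section Polygon

variable {n : ℕ} [NeZero (2 * n)]

variable (n) in
def cornerPairing (e : ZMod 2) : Set (Sym2 (Fin (2 * n))) :=
  {p | ∃ k, Fin.parity (dvd_mul_right 2 n) k = e ∧ p = s(k, k + 1)}

theorem polygonB_eq_cornerPairing : polygonB n = cornerPairing n 0 := by
  ext p
  simp only [polygonB, cornerPairing, mem_ofPred_eq, finRotate_apply, Fin.parity_apply,
    ZMod.natCast_eq_zero_iff_even]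

theorem polygonW_eq_cornerPairing : polygonW n = cornerPairing n 1 := by
  ext p
  simp only [polygonW, cornerPairing, mem_ofPred_eq, finRotate_apply, Fin.parity_apply,
    ZMod.natCast_eq_one_iff_odd, Nat.not_even_iff_odd]

theorem mk_mem_cornerPairing (k : Fin (2 * n)) :
    s(k, k + 1) ∈ cornerPairing n (Fin.parity (dvd_mul_right 2 n) k) :=
  ⟨k, rfl, rfl⟩

theorem eq_of_mk_mem_cornerPairing {e : ZMod 2} {a b b' : Fin (2 * n)}
    (h : s(a, b) ∈ cornerPairing n e) (h' : s(a, b') ∈ cornerPairing n e) : b = b' := by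
  obtain ⟨k, hk, h⟩ := h
  obtain ⟨k', hk', h'⟩ := h'
  have ne_add_one {x y : Fin (2 * n)} (hx : Fin.parity (dvd_mul_right 2 n) x = e)
      (hy : Fin.parity (dvd_mul_right 2 n) y = e) : x ≠ y + 1 := fun hxy => by
    have := congrArg (Fin.parity (dvd_mul_right 2 n)) hxy
    rw [map_add, map_one, hx, hy] at this
    exact (succ_ne_self e).symm this
  rw [Sym2.eq_iff] at h h'
  rcases h with ⟨rfl, rfl⟩ | ⟨rfl, rfl⟩ <;> rcases h' with ⟨hkk', rfl⟩ | ⟨hkk', rfl⟩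
  · rw [hkk']
  · exact absurd hkk' (ne_add_one hk hk')
  · exact absurd hkk'.symm (ne_add_one hk' hk)
  · rw [add_right_cancel hkk']

theorem mem_preservedSubgroup_iff {π : Equiv.Perm (Fin (2 * n))} :
    π ∈ preservedSubgroup (polygonB n) (polygonW n) ↔
      ∀ e, MapsTo (Sym2.map π) (cornerPairing n e) (cornerPairing n e) := by
  rw [polygonB_eq_cornerPairing, polygonW_eq_cornerPairing]
  refine ⟨fun ⟨hB, hW⟩ e => ?_, fun h => mem_preservedSubgroup_of_mapsTo (h 0) (h 1)⟩
  rcases ZMod.eq_zero_or_eq_one e with rfl | rfl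
  · exact fun p hp => (hB p).1 hp
  · exact fun p hp => (hW p).1 hp

theorem mem_preservedSubgroup_of_forall_mk_eq {g : Equiv.Perm (Fin (2 * n))}
    (h : ∀ k, ∃ k', Fin.parity (dvd_mul_right 2 n) k' = Fin.parity (dvd_mul_right 2 n) k ∧
      s(g k, g (k + 1)) = s(k', k' + 1)) :
    g ∈ preservedSubgroup (polygonB n) (polygonW n) := by
  refine mem_preservedSubgroup_iff.mpr fun e p ⟨k, hk, hp⟩ => ?_
  obtain ⟨k', hk', hg⟩ := h k
  exact ⟨k', hk'.trans hk, by rw [hp, Sym2.map_mk, hg]⟩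

theorem addRight_mem_preservedSubgroup {c : Fin (2 * n)}
    (hc : Fin.parity (dvd_mul_right 2 n) c = 0) :
    Equiv.addRight c ∈ preservedSubgroup (polygonB n) (polygonW n) :=
  mem_preservedSubgroup_of_forall_mk_eq fun k =>
    ⟨k + c, by rw [map_add, hc, add_zero], by simp only [Equiv.coe_addRight, add_right_comm]⟩

theorem subLeft_mem_preservedSubgroup {c : Fin (2 * n)}
    (hc : Fin.parity (dvd_mul_right 2 n) c = 1) :
    Equiv.subLeft c ∈ preservedSubgroup (polygonB n) (polygonW n) :=
  mem_preservedSubgroup_of_forall_mk_eq fun k =>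
    ⟨c - k - 1,
      by rw [map_sub, map_sub, map_one, hc, sub_sub_cancel_left, ZMod.neg_eq_self_mod_two],
      by rw [Equiv.subLeft_apply, Equiv.subLeft_apply, sub_add_cancel, Sym2.eq_swap, sub_sub]⟩

theorem eq_of_apply_zero_eq {π σ : Equiv.Perm (Fin (2 * n))}
    (hπ : π ∈ preservedSubgroup (polygonB n) (polygonW n))
    (hσ : σ ∈ preservedSubgroup (polygonB n) (polygonW n)) (h : π 0 = σ 0) : π = σ := by
  suffices ∀ m : ℕ, π m = σ m from Equiv.ext fun x => by simpa using this x.val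
  intro m
  induction m with
  | zero => simpa using h
  | succ m ih =>
    have hm := mk_mem_cornerPairing (m : Fin (2 * n))
    rw [Nat.cast_succ]
    refine eq_of_mk_mem_cornerPairing (mem_preservedSubgroup_iff.mp hπ _ hm) ?_
    rw [ih]
    exact mem_preservedSubgroup_iff.mp hσ _ hm

theorem exists_mem_preservedSubgroup_apply_zero_eq (c : Fin (2 * n)) :
    ∃ π ∈ preservedSubgroup (polygonB n) (polygonW n), π 0 = c := by
  rcases ZMod.eq_zero_or_eq_one (Fin.parity (dvd_mul_right 2 n) c) with hc | hc
  · exact ⟨_, addRight_mem_preservedSubgroup hc, zero_add c⟩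
  · exact ⟨_, subLeft_mem_preservedSubgroup hc, sub_zero c⟩

end Polygon

/-- The subgroup of the symmetric group on the `2n` edge-sides consisting of the
permutations preserving both corner pairings `B` and `W` of the bicolored
`2n`-gon has exactly `2n` elements. -/
theorem preserving_group_card (n : ℕ) (hn : 1 ≤ n) :
    Nat.card (preservedSubgroup (polygonB n) (polygonW n)) = 2 * n := by
  have : NeZero (2 * n) := ⟨by omega⟩
  have hbij : Function.Bijective fun π : preservedSubgroup (polygonB n) (polygonW n) =>
      (π : Equiv.Perm (Fin (2 * n))) 0 := by
    refine ⟨fun π σ h => Subtype.ext (eq_of_apply_zero_eq π.2 σ.2 h), fun c => ?_⟩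
    obtain ⟨π, hπ, hπc⟩ := exists_mem_preservedSubgroup_apply_zero_eq c
    exact ⟨⟨π, hπ⟩, hπc⟩
  rw [Nat.card_eq_of_bijective _ hbij, Nat.card_fin]

end
end

section
/- The number of pairs (σ₁, σ₂) of permutations of {1,...,n} such that the subgroup generated by σ₁ and σ₂ acts transitively on {1,...,n}, multiplied by (2n)!, equals 2·n! times the number of connected orientable non-oriented maps (B,W,E) on the label set {1,...,2n}, where B, W, E are pair-partitions of {1,...,2n}. -/
open Classical

noncomputable section

variable {α : Type*} {β : Type*}

/-- `P` is a pair-partition (perfect matching) of the set `X`: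
every block is a non-diagonal unordered pair contained in `X`,
and every element of `X` belongs to exactly one block. -/
def IsPairPartitionOn (X : Set α) (P : Set (Sym2 α)) : Prop :=
  (∀ p ∈ P, ¬ p.IsDiag ∧ ∀ x ∈ p, x ∈ X) ∧ ∀ x ∈ X, ∃! p, p ∈ P ∧ x ∈ p

/-- A (non-oriented) map encoded as a triple of pair-partitions of the set `X` of
edge-sides: `B` (corners at black vertices), `W` (corners at white vertices),
`E` (gluings of edge-sides into edges). -/
structure PMap (α : Type*) where
  X : Set α
  B : Set (Sym2 α)
  W : Set (Sym2 α)
  E : Set (Sym2 α)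

def PMap.IsMap (M : PMap α) : Prop :=
  IsPairPartitionOn M.X M.B ∧ IsPairPartitionOn M.X M.W ∧ IsPairPartitionOn M.X M.E

/-- two edge-sides are adjacent w.r.t. a collection of pairs -/
def pairAdj (S : Set (Sym2 α)) (x y : α) : Prop := ∃ p ∈ S, x ∈ p ∧ y ∈ p

def reach (S : Set (Sym2 α)) : α → α → Prop := Relation.ReflTransGen (pairAdj S)

def classesOf (M : PMap α) (S : Set (Sym2 α)) : Set (Set α) :=
  {C | ∃ x ∈ M.X, C = {y | reach S x y}}

/-- the faces of a map: connected components of edge-sides under `B ∪ W` (polygons) -/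
def PMap.faces (M : PMap α) : Set (Set α) := classesOf M (M.B ∪ M.W)
def PMap.components (M : PMap α) : Set (Set α) := classesOf M (M.B ∪ M.W ∪ M.E)
def PMap.blackVertices (M : PMap α) : Set (Set α) := classesOf M (M.B ∪ M.E)
def PMap.whiteVertices (M : PMap α) : Set (Set α) := classesOf M (M.W ∪ M.E)

def PMap.numFaces (M : PMap α) : ℕ := M.faces.ncard
def PMap.numComponents (M : PMap α) : ℕ := M.components.ncard
def PMap.numVertices (M : PMap α) : ℕ := M.blackVertices.ncard + M.whiteVertices.ncard

/-- top-degree map: each connected component is one of the faces -/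
def PMap.TopDegree (M : PMap α) : Prop := ∀ C ∈ M.components, C ∈ M.faces

/-- the number of faces equals the number of connected components -/
def PMap.Balanced (M : PMap α) : Prop := M.numFaces = M.numComponents

def PMap.Connected (M : PMap α) : Prop :=
  ∀ x ∈ M.X, ∀ y ∈ M.X, reach (M.B ∪ M.W ∪ M.E) x y

/-- orientability: the edge-sides can be 2-colored (oriented) so that any two
distinct edge-sides sharing a corner or glued together get opposite colors -/
def PMap.Orientable (M : PMap α) : Prop :=
  ∃ s : α → Bool, ∀ p ∈ M.B ∪ M.W ∪ M.E, ∀ x ∈ p, ∀ y ∈ p, x ≠ y → s x ≠ s y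

/-- a coloring of edge-sides alternating along the boundary of every face -/
def AltColoring (M : PMap α) (s : α → Bool) : Prop :=
  ∀ p ∈ M.B ∪ M.W, ∀ x ∈ p, ∀ y ∈ p, x ≠ y → s x ≠ s y

/-- straight edge: both sides on the same face, traversed in opposite directions -/
def PMap.Straight (M : PMap α) (e : Sym2 α) : Prop :=
  e ∈ M.E ∧ ∀ a b : α, e = s(a, b) →
    reach (M.B ∪ M.W) a b ∧ ∀ s : α → Bool, AltColoring M s → s a ≠ s b

/-- twisted edge: both sides on the same face, traversed in the same direction -/
def PMap.Twisted (M : PMap α) (e : Sym2 α) : Prop :=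
  e ∈ M.E ∧ ∀ a b : α, e = s(a, b) →
    reach (M.B ∪ M.W) a b ∧ ∀ s : α → Bool, AltColoring M s → s a = s b

/-- interface edge: its two sides lie on two different faces -/
def PMap.Interface (M : PMap α) (e : Sym2 α) : Prop :=
  e ∈ M.E ∧ ∀ a b : α, e = s(a, b) → ¬ reach (M.B ∪ M.W) a b

def PMap.IsBridge (M : PMap α) (e : Sym2 α) : Prop :=
  e ∈ M.E ∧ ∀ a b : α, e = s(a, b) → ¬ reach (M.B ∪ M.W ∪ (M.E \ {e})) a b

def PMap.IsLeaf (M : PMap α) (e : Sym2 α) : Prop :=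
  e ∈ M.E ∧ (e ∈ M.B ∨ e ∈ M.W)

/-- removing the two edge-sides of the edge `e` from a pairing: pairs avoiding `e`
are kept, and the two pairs meeting `e` merge into one new pair -/
def removeFrom (P : Set (Sym2 α)) (e : Sym2 α) : Set (Sym2 α) :=
  {p ∈ P | ∀ x ∈ e, x ∉ p} ∪
  {q | ∃ a b x y : α, e = s(a, b) ∧ s(a, x) ∈ P ∧ s(b, y) ∈ P ∧
        x ∉ e ∧ y ∉ e ∧ q = s(x, y)}

/-- the map `M` with the edge `e` removed (isolated vertices disappear) -/
def PMap.remove (M : PMap α) (e : Sym2 α) : PMap α where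
  X := M.X \ {x | x ∈ e}
  B := removeFrom M.B e
  W := removeFrom M.W e
  E := {p ∈ M.E | ∀ x ∈ e, x ∉ p}

def PMap.removeList (M : PMap α) (L : List (Sym2 α)) : PMap α := L.foldl PMap.remove M

/-- a history: a linear order on the edges of `M`, given as a duplicate-free list -/
def PMap.IsHistory (M : PMap α) (L : List (Sym2 α)) : Prop :=
  L.Nodup ∧ ∀ e, e ∈ L ↔ e ∈ M.E

/-- `(M, L)` is a top-degree pair: each stage of the edge removal is a top-degree map -/
def TopDegreePair (M : PMap α) (L : List (Sym2 α)) : Prop :=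
  M.IsHistory L ∧ ∀ i ≤ L.length, (M.removeList (L.take i)).TopDegree

/-- `(M, L)` is balanced: at each stage of the edge removal the number of faces
equals the number of connected components -/
def BalancedPair (M : PMap α) (L : List (Sym2 α)) : Prop :=
  M.IsHistory L ∧ ∀ i ≤ L.length, (M.removeList (L.take i)).Balanced

/-- twisting the edge with sides `a`, `b`: only the white-corner pairing changes,
by exchanging the roles of `a` and `b` -/
def PMap.twist (M : PMap α) (a b : α) : PMap α :=
  { M with W := Sym2.map (Equiv.swap a b) '' M.W }

/-- the weight of an edge: `1` for a straight edge, `γ` for a twisted edge,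
`1/2` for an interface edge -/
def edgeWeight (M : PMap α) (e : Sym2 α) : Polynomial ℚ :=
  if M.Straight e then 1 else if M.Twisted e then Polynomial.X else Polynomial.C (1/2)

/-- the weight `mon_{M,≺}` of a map with a history -/
def monList (M : PMap α) : List (Sym2 α) → Polynomial ℚ
  | [] => 1
  | e :: L => edgeWeight M e * monList (M.remove e) L

def PMap.edgeFinset (M : PMap α) [Fintype α] : Finset (Sym2 α) :=
  (Set.toFinite M.E).toFinset

/-- all histories of `M`, listed as the permutations of a list of its edges -/
def histories (M : PMap α) [Fintype α] : List (List (Sym2 α)) :=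
  M.edgeFinset.toList.permutations

/-- the measure of non-orientability: the average of `mon_{M,≺}` over all histories -/
def mon (M : PMap α) [Fintype α] : Polynomial ℚ :=
  Polynomial.C (1 / (M.edgeFinset.card.factorial : ℚ)) * ((histories M).map (monList M)).sum

/-- the probability that a uniformly random history keeps, at every stage,
the number of faces equal to the number of connected components -/
def montop (M : PMap α) [Fintype α] : ℚ :=
  (((histories M).filter (fun L => decide (BalancedPair M L))).length : ℚ) /
    (M.edgeFinset.card.factorial : ℚ)

/-- an edge is incident to a vertex (a class of edge-sides) -/
def Incident (e : Sym2 α) (C : Set α) : Prop := ∃ x ∈ e, x ∈ C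

/-- isomorphism of the underlying bicolored (multi)graphs of two maps -/
def GraphIso (M : PMap α) (M' : PMap β) : Prop :=
  ∃ (fb fw : Set α → Set β) (fe : Sym2 α → Sym2 β),
    Set.BijOn fb M.blackVertices M'.blackVertices ∧
    Set.BijOn fw M.whiteVertices M'.whiteVertices ∧
    Set.BijOn fe M.E M'.E ∧
    (∀ e ∈ M.E, ∀ C ∈ M.blackVertices, (Incident e C ↔ Incident (fe e) (fb C))) ∧
    (∀ e ∈ M.E, ∀ C ∈ M.whiteVertices, (Incident e C ↔ Incident (fe e) (fw C)))

/-- relabelling the edge-sides of a map by a permutation -/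
def PMap.relabel (π : Equiv.Perm α) (M : PMap α) : PMap α where
  X := π '' M.X
  B := Sym2.map π '' M.B
  W := Sym2.map π '' M.W
  E := Sym2.map π '' M.E

/-- two labelled maps give the same unlabelled map -/
def SameUnlabeled (M M' : PMap α) : Prop := ∃ π : Equiv.Perm α, M' = M.relabel π

/-- `L(B,W)` consists of a single polygon, i.e. the map has exactly one face -/
def OnePolygon (M : PMap α) : Prop := ∀ x ∈ M.X, ∀ y ∈ M.X, reach (M.B ∪ M.W) x y

/-- the subgroup generated by `σ₁, σ₂` acts transitively -/
def TransitivePair {n : ℕ} (σ₁ σ₂ : Equiv.Perm (Fin n)) : Prop :=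
  ∀ x y : Fin n, ∃ g ∈ Subgroup.closure ({σ₁, σ₂} : Set (Equiv.Perm (Fin n))), g x = y

/-- the non-oriented map associated to an oriented map `M(σ₁,σ₂)` and a bijection
`f` labelling the edge-sides -/
def toPMapF {n : ℕ} (f : Fin n × Fin 2 ≃ β) (σ₁ σ₂ : Equiv.Perm (Fin n)) : PMap β where
  X := Set.univ
  B := {p | ∃ k : Fin n, p = s(f (k, 0), f (σ₂ k, 1))}
  W := {p | ∃ k : Fin n, p = s(f (k, 1), f (σ₁ k, 0))}
  E := {p | ∃ k : Fin n, p = s(f (k, 0), f (k, 1))}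

/-- the number of cycles (orbits, including fixed points) of a permutation -/
def cycleCount {γ : Type*} (σ : Equiv.Perm γ) : ℕ :=
  Set.ncard {O : Set γ | ∃ x : γ, O = {y | ∃ k : ℤ, (σ ^ k) x = y}}


/-!
Labelling the `2n` edge-sides of the oriented map of `(σ₁, σ₂)` by a bijection
`f : [n] × {0, 1} ≃ [2n]` gives a non-oriented map `toPMapF f σ₁ σ₂`; it is orientable
(colour a side by its second coordinate), and it is connected exactly when `⟨σ₁, σ₂⟩` is
transitive. Conversely, a connected orientable map `M` on `[2n]` has exactly two proper
2-colourings of its edge-sides, each colouring `n` sides `true`, and a triple `(f, σ₁, σ₂)`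
over `M` amounts to such a colouring together with a numbering of its `true` sides: `f (k, 1)`
is the `k`-th `true` side, `f (k, 0)` its partner across an edge, and `σ₁, σ₂` are read off
from `W` and `B`. So every fibre of `(f, σ₁, σ₂) ↦ M` has `2 · n!` elements, while there
are `(2n)!` labellings `f`.
-/

def partner (P : Set (Sym2 α)) (x : α) : α :=
  if h : ∃ y, s(x, y) ∈ P then h.choose else x

namespace IsPairPartitionOn

variable {P Q : Set (Sym2 α)}

theorem partner_mem (hP : IsPairPartitionOn Set.univ P) (x : α) : s(x, partner P x) ∈ P := by
  obtain ⟨p, ⟨hp, hxp⟩, -⟩ := hP.2 x trivial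
  obtain ⟨y, rfl⟩ := Sym2.mem_iff_exists.mp hxp
  have hex : ∃ y, s(x, y) ∈ P := ⟨y, hp⟩
  rw [partner, dif_pos hex]
  exact hex.choose_spec

theorem partner_eq_of_mk_mem (hP : IsPairPartitionOn Set.univ P) {x y : α} (h : s(x, y) ∈ P) :
    partner P x = y := by
  obtain ⟨p, -, hu⟩ := hP.2 x trivial
  refine Sym2.congr_right.mp ((hu _ ⟨hP.partner_mem x, ?_⟩).trans (hu _ ⟨h, ?_⟩).symm) <;>
    exact Sym2.mem_mk_left _ _

theorem partner_ne (hP : IsPairPartitionOn Set.univ P) (x : α) : partner P x ≠ x :=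
  fun h => (hP.1 _ (hP.partner_mem x)).1 (Sym2.mk_isDiag_iff.mpr h.symm)

theorem partner_involutive (hP : IsPairPartitionOn Set.univ P) :
    Function.Involutive (partner P) :=
  fun x => hP.partner_eq_of_mk_mem (Sym2.eq_swap ▸ hP.partner_mem x)

theorem eq_of_subset {X : Set α} (hP : IsPairPartitionOn X P) (hQ : IsPairPartitionOn X Q)
    (h : Q ⊆ P) : Q = P := by
  refine h.antisymm fun p hp => ?_
  induction p using Sym2.ind with
  | _ x y =>
    have hx : x ∈ X := (hP.1 _ hp).2 x (Sym2.mem_mk_left x y)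
    obtain ⟨q, ⟨hq, hxq⟩, -⟩ := hQ.2 x hx
    obtain ⟨_, -, hu⟩ := hP.2 x hx
    rwa [hu _ ⟨hp, Sym2.mem_mk_left x y⟩, ← hu q ⟨h hq, hxq⟩]

end IsPairPartitionOn

theorem isPairPartitionOn_univ_of_range {ι : Type*} {u v : ι → α} (hu : u.Injective)
    (hv : v.Injective) (huv : ∀ i j, u i ≠ v j)
    (hcov : Set.range u ∪ Set.range v = Set.univ) :
    IsPairPartitionOn Set.univ {p | ∃ k, p = s(u k, v k)} := by
  refine ⟨?_, fun x _ => ?_⟩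
  · rintro _ ⟨k, rfl⟩
    exact ⟨fun h => huv k k (Sym2.mk_isDiag_iff.mp h), fun _ _ => trivial⟩
  · have hx : x ∈ Set.range u ∪ Set.range v := hcov ▸ trivial
    rcases hx with ⟨k, rfl⟩ | ⟨k, rfl⟩ <;>
      refine ⟨s(u k, v k), ⟨⟨k, rfl⟩, by simp⟩, ?_⟩ <;>
      rintro _ ⟨⟨j, rfl⟩, hm⟩ <;>
      rcases Sym2.mem_iff.mp hm with h | h
    · rw [hu h]
    · exact (huv _ _ h).elim
    · exact (huv _ _ h.symm).elim
    · rw [hv h]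

theorem range_apply_zero_union_range_apply_one {ι : Type*} (f : ι × Fin 2 ≃ β) :
    Set.range (fun k => f (k, 0)) ∪ Set.range (fun k => f (k, 1)) = Set.univ := by
  refine Set.eq_univ_of_forall fun x => ?_
  obtain ⟨⟨k, i⟩, rfl⟩ := f.surjective x
  fin_cases i
  exacts [Or.inl ⟨k, rfl⟩, Or.inr ⟨k, rfl⟩]

theorem pairAdj_symm {S : Set (Sym2 α)} {x y : α} (h : pairAdj S x y) : pairAdj S y x :=
  let ⟨p, hp, hx, hy⟩ := h
  ⟨p, hp, hy, hx⟩

theorem reach_symm {S : Set (Sym2 α)} {x y : α} (h : reach S x y) : reach S y x := by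
  induction h with
  | refl => exact .refl
  | tail _ hyz ih => exact .head (pairAdj_symm hyz) ih

def PMap.IsProperColoring (M : PMap α) (c : α → Bool) : Prop :=
  ∀ p ∈ M.B ∪ M.W ∪ M.E, ∀ x ∈ p, ∀ y ∈ p, x ≠ y → c x ≠ c y

namespace PMap.IsProperColoring

variable {M : PMap α} {c c' : α → Bool}

theorem apply_partner (hc : M.IsProperColoring c) {P : Set (Sym2 α)}
    (hP : IsPairPartitionOn Set.univ P) (hPM : P ⊆ M.B ∪ M.W ∪ M.E) (x : α) :
    c (partner P x) = !c x :=
  Bool.eq_not_of_ne <| hc _ (hPM (hP.partner_mem x)) _ (Sym2.mem_mk_right _ _) _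
    (Sym2.mem_mk_left _ _) (hP.partner_ne x)

theorem not (hc : M.IsProperColoring c) : M.IsProperColoring fun x => !c x :=
  fun p hp x hx y hy hxy => by simpa using hc p hp x hx y hy hxy

theorem eq_of_reach (hc : M.IsProperColoring c) (hc' : M.IsProperColoring c') {x y : α}
    (hx : c x = c' x) (h : reach (M.B ∪ M.W ∪ M.E) x y) : c y = c' y := by
  induction h with
  | refl => exact hx
  | @tail y z _ hyz ih =>
    obtain ⟨p, hp, hy, hz⟩ := hyz
    by_cases hne : y = z
    · rwa [← hne]
    · rw [Bool.eq_not_of_ne (hc p hp z hz y hy (Ne.symm hne)),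
        Bool.eq_not_of_ne (hc' p hp z hz y hy (Ne.symm hne)), ih]

end PMap.IsProperColoring

theorem PMap.card_properColorings [Nonempty α] {M : PMap α} (hX : M.X = Set.univ)
    (hconn : M.Connected) (hor : M.Orientable) :
    Nat.card {c // M.IsProperColoring c} = 2 := by
  obtain ⟨x₀⟩ := ‹Nonempty α›
  have hbij : Function.Bijective fun c : {c // M.IsProperColoring c} => c.1 x₀ := by
    refine ⟨fun c c' h => Subtype.ext <| funext fun y => ?_, fun b => ?_⟩
    · exact c.2.eq_of_reach c'.2 h (hconn x₀ (hX ▸ trivial) y (hX ▸ trivial))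
    · obtain ⟨c, hc : M.IsProperColoring c⟩ := hor
      by_cases h : c x₀ = b
      · exact ⟨⟨c, hc⟩, h⟩
      · exact ⟨⟨_, hc.not⟩, by simpa using Bool.eq_not_of_ne h⟩
  simp [Nat.card_congr (Equiv.ofBijective _ hbij)]

theorem PMap.IsProperColoring.card_eq_two_mul_card_true [Finite α] {M : PMap α}
    {c : α → Bool} (hc : M.IsProperColoring c) (hE : IsPairPartitionOn Set.univ M.E) :
    Nat.card α = 2 * Nat.card {x // c x = true} := by
  have e : {x // c x = true} ≃ {x // ¬c x = true} :=
    (hE.partner_involutive.toPerm _).subtypeEquiv fun x => by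
      simp [hc.apply_partner hE Set.subset_union_right]
  rw [Nat.card_congr (Equiv.sumCompl fun x => c x = true).symm, Nat.card_sum,
    ← Nat.card_congr e]
  ring

theorem Nat.card_equiv_of_card_eq [Finite α] [Finite β] (h : Nat.card α = Nat.card β) :
    Nat.card (α ≃ β) = (Nat.card α).factorial := by
  obtain ⟨e⟩ := Finite.card_eq.mp h
  rw [Nat.card_congr ((Equiv.refl α).equivCongr e.symm), Nat.card_perm]

theorem Nat.card_sigma_of_card_eq {ι : Type*} [Finite ι] {F : ι → Type*} [∀ i, Finite (F i)]
    {k : ℕ} (h : ∀ i, Nat.card (F i) = k) : Nat.card (Σ i, F i) = Nat.card ι * k := by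
  have := Fintype.ofFinite ι
  rw [Nat.card_sigma, Finset.sum_congr rfl fun i _ => h i, Finset.sum_const, Finset.card_univ,
    Nat.card_eq_fintype_card, smul_eq_mul]

theorem Nat.card_eq_card_mul_of_card_fiber {γ δ : Type*} [Finite γ] [Finite δ] (φ : γ → δ)
    {k : ℕ} (h : ∀ d, Nat.card {x // φ x = d} = k) : Nat.card γ = Nat.card δ * k := by
  rw [Nat.card_congr (Equiv.sigmaFiberEquiv φ).symm, Nat.card_sigma_of_card_eq h]

instance [Finite α] : Finite (PMap α) :=
  Finite.of_injective (fun M => (M.X, M.B, M.W, M.E)) fun M M' h => by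
    cases M; cases M'; simp_all

def sideColor {ι : Type*} (f : ι × Fin 2 ≃ β) (x : β) : Bool := (f.symm x).2 = 1

section ToPMapF

variable {n : ℕ} (f : Fin n × Fin 2 ≃ β) (σ₁ σ₂ : Equiv.Perm (Fin n))

theorem toPMapF_isMap : (toPMapF f σ₁ σ₂).IsMap := by
  have h01 : ∀ i j, f (i, 0) ≠ f (j, 1) := fun i j h => by simpa using f.injective h
  have hinj : ∀ l : Fin 2, Function.Injective fun k => f (k, l) :=
    fun l i j h => by simpa using f.injective h
  have hσ : ∀ (σ : Equiv.Perm (Fin n)) (l : Fin 2),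
      Set.range (fun k => f (σ k, l)) = Set.range fun k => f (k, l) :=
    fun σ l => σ.surjective.range_comp fun k => f (k, l)
  have hcov := range_apply_zero_union_range_apply_one f
  refine ⟨?_, ?_, ?_⟩
  · exact isPairPartitionOn_univ_of_range (hinj 0) ((hinj 1).comp σ₂.injective)
      (fun i j => h01 i _) (by rwa [hσ])
  · exact isPairPartitionOn_univ_of_range (hinj 1) ((hinj 0).comp σ₁.injective)
      (fun i j h => h01 _ i h.symm) (by rwa [hσ, Set.union_comm])
  · exact isPairPartitionOn_univ_of_range (hinj 0) (hinj 1) h01 hcov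

theorem toPMapF_isProperColoring : (toPMapF f σ₁ σ₂).IsProperColoring (sideColor f) := by
  rintro p hp x hx y hy hxy
  rcases hp with (⟨k, rfl⟩ | ⟨k, rfl⟩) | ⟨k, rfl⟩ <;>
    rcases Sym2.mem_iff.mp hx with rfl | rfl <;>
    rcases Sym2.mem_iff.mp hy with rfl | rfl <;>
    first
      | exact absurd rfl hxy
      | simp [sideColor]

theorem toPMapF_orientable : (toPMapF f σ₁ σ₂).Orientable :=
  ⟨sideColor f, toPMapF_isProperColoring f σ₁ σ₂⟩

theorem partner_toPMapF_E (k : Fin n) : partner (toPMapF f σ₁ σ₂).E (f (k, 1)) = f (k, 0) :=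
  (toPMapF_isMap f σ₁ σ₂).2.2.partner_eq_of_mk_mem ⟨k, Sym2.eq_swap⟩

theorem partner_toPMapF_B (k : Fin n) :
    partner (toPMapF f σ₁ σ₂).B (f (k, 0)) = f (σ₂ k, 1) :=
  (toPMapF_isMap f σ₁ σ₂).1.partner_eq_of_mk_mem ⟨k, rfl⟩

theorem partner_toPMapF_W (k : Fin n) :
    partner (toPMapF f σ₁ σ₂).W (f (k, 1)) = f (σ₁ k, 0) :=
  (toPMapF_isMap f σ₁ σ₂).2.1.partner_eq_of_mk_mem ⟨k, rfl⟩

end ToPMapF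

section Connectivity

variable {n : ℕ} (f : Fin n × Fin 2 ≃ β) {σ₁ σ₂ : Equiv.Perm (Fin n)}

theorem reach_toPMapF_of_mem_closure {g : Equiv.Perm (Fin n)}
    (hg : g ∈ Subgroup.closure {σ₁, σ₂}) (k : Fin n) :
    reach ((toPMapF f σ₁ σ₂).B ∪ (toPMapF f σ₁ σ₂).W ∪ (toPMapF f σ₁ σ₂).E)
      (f (k, 0)) (f (g k, 0)) := by
  induction hg using Subgroup.closure_induction generalizing k with
  | mem τ hτ =>
    rcases hτ with rfl | rfl
    · exact .tail (b := f (k, 1)) (.single ⟨_, .inr ⟨k, rfl⟩, by simp, by simp⟩)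
        ⟨_, .inl (.inr ⟨k, rfl⟩), by simp, by simp⟩
    · exact .tail (b := f (τ k, 1)) (.single ⟨_, .inl (.inl ⟨k, rfl⟩), by simp, by simp⟩)
        ⟨_, .inr ⟨τ k, rfl⟩, by simp, by simp⟩
  | one => exact .refl
  | mul τ ρ _ _ hτ hρ => exact (hρ k).trans (hτ (ρ k))
  | inv τ _ hτ => simpa using reach_symm (hτ (τ⁻¹ k))

theorem exists_mem_closure_of_reach_toPMapF {x y : β}
    (h : reach ((toPMapF f σ₁ σ₂).B ∪ (toPMapF f σ₁ σ₂).W ∪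
      (toPMapF f σ₁ σ₂).E) x y) :
    ∃ g ∈ Subgroup.closure {σ₁, σ₂}, g (f.symm x).1 = (f.symm y).1 := by
  induction h with
  | refl => exact ⟨1, one_mem _, rfl⟩
  | tail _ hyz ih =>
    obtain ⟨g, hg, hgx⟩ := ih
    obtain ⟨p, hp, hy, hz⟩ := hyz
    obtain ⟨k, i, j, τ, hτ, rfl⟩ : ∃ k i j, ∃ τ ∈ Subgroup.closure {σ₁, σ₂},
        p = s(f (k, i), f (τ k, j)) := by
      rcases hp with (⟨k, rfl⟩ | ⟨k, rfl⟩) | ⟨k, rfl⟩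
      · exact ⟨k, 0, 1, σ₂, Subgroup.subset_closure (by simp), rfl⟩
      · exact ⟨k, 1, 0, σ₁, Subgroup.subset_closure (by simp), rfl⟩
      · exact ⟨k, 0, 1, 1, one_mem _, rfl⟩
    rcases Sym2.mem_iff.mp hy with rfl | rfl <;> rcases Sym2.mem_iff.mp hz with rfl | rfl
    · exact ⟨g, hg, by simp [hgx]⟩
    · exact ⟨τ * g, mul_mem hτ hg, by simp [hgx]⟩
    · exact ⟨τ⁻¹ * g, mul_mem (inv_mem hτ) hg, by simp [hgx]⟩
    · exact ⟨g, hg, by simp [hgx]⟩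

theorem toPMapF_connected_iff :
    (toPMapF f σ₁ σ₂).Connected ↔ TransitivePair σ₁ σ₂ := by
  constructor
  · intro h k l
    simpa using exists_mem_closure_of_reach_toPMapF f (h (f (k, 0)) trivial (f (l, 0)) trivial)
  · intro h x _ y _
    have hside (z : β) : reach ((toPMapF f σ₁ σ₂).B ∪ (toPMapF f σ₁ σ₂).W ∪
        (toPMapF f σ₁ σ₂).E) (f ((f.symm z).1, 0)) z := by
      obtain ⟨⟨k, i⟩, rfl⟩ := f.surjective z
      fin_cases i
      · rw [f.symm_apply_apply]
        exact .refl
      · exact .single ⟨_, .inr ⟨k, rfl⟩, by simp, by simp⟩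
    obtain ⟨g, hg, hgxy⟩ := h (f.symm x).1 (f.symm y).1
    exact (reach_symm (hside x)).trans
      (hgxy ▸ reach_toPMapF_of_mem_closure f hg _ |>.trans (hside y))

end Connectivity

def conjSubtypePerm {ι : Type*} {p : β → Prop} (g : ι ≃ Subtype p) (τ : Equiv.Perm β)
    (hτ : ∀ x, p (τ x) ↔ p x) : Equiv.Perm ι :=
  g.symm.permCongr (τ.subtypePerm hτ)

theorem coe_apply_conjSubtypePerm {ι : Type*} {p : β → Prop} (g : ι ≃ Subtype p)
    (τ : Equiv.Perm β) (hτ : ∀ x, p (τ x) ↔ p x) (k : ι) :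
    (g (conjSubtypePerm g τ hτ k) : β) = τ (g k) := by
  simp [conjSubtypePerm, Equiv.permCongr_apply]

section OfColoring

variable {n : ℕ} {M : PMap β} (hB : IsPairPartitionOn Set.univ M.B)
  (hW : IsPairPartitionOn Set.univ M.W) (hE : IsPairPartitionOn Set.univ M.E)
  {c : β → Bool} (hc : M.IsProperColoring c) (g : Fin n ≃ {x // c x = true})

def labellingOfColoring : Fin n × Fin 2 ≃ β where
  toFun q := ![partner M.E (g q.1), g q.1] q.2
  invFun x :=
    if h : c x = true then (g.symm ⟨x, h⟩, 1)
    else (g.symm ⟨partner M.E x, by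
      simpa [hc.apply_partner hE Set.subset_union_right] using h⟩, 0)
  left_inv := by
    rintro ⟨k, i⟩
    fin_cases i
    · simp [hc.apply_partner hE Set.subset_union_right, hE.partner_involutive _, (g k).2]
    · simp [(g k).2]
  right_inv x := by
    by_cases h : c x = true
    · simp [h]
    · simp [h, hE.partner_involutive _]

theorem sideColor_labellingOfColoring : sideColor (labellingOfColoring hE hc g) = c := by
  funext x
  by_cases h : c x = true <;> simp [sideColor, labellingOfColoring, h]

def perm₁OfColoring : Equiv.Perm (Fin n) :=
  conjSubtypePerm g (hE.partner_involutive.toPerm _ * hW.partner_involutive.toPerm _) fun x => by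
    simp [hc.apply_partner hE Set.subset_union_right,
      hc.apply_partner hW fun _ hp => .inl (.inr hp)]

def perm₂OfColoring : Equiv.Perm (Fin n) :=
  conjSubtypePerm g (hB.partner_involutive.toPerm _ * hE.partner_involutive.toPerm _) fun x => by
    simp [hc.apply_partner hE Set.subset_union_right,
      hc.apply_partner hB fun _ hp => .inl (.inl hp)]

theorem toPMapF_labellingOfColoring (hX : M.X = Set.univ) :
    toPMapF (labellingOfColoring hE hc g) (perm₁OfColoring hW hE hc g)
      (perm₂OfColoring hB hE hc g) = M := by
  have hmap := toPMapF_isMap (labellingOfColoring hE hc g) (perm₁OfColoring hW hE hc g)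
    (perm₂OfColoring hB hE hc g)
  obtain ⟨X, B, W, E⟩ := M
  refine (PMap.mk.injEq ..).mpr ⟨hX.symm, hB.eq_of_subset hmap.1 ?_,
    hW.eq_of_subset hmap.2.1 ?_, hE.eq_of_subset hmap.2.2 ?_⟩ <;> rintro _ ⟨k, rfl⟩
  · show s(partner E (g k), (g (perm₂OfColoring hB hE hc g k) : β)) ∈ B
    rw [perm₂OfColoring, coe_apply_conjSubtypePerm]
    exact hB.partner_mem _
  · show s((g k : β), partner E (g (perm₁OfColoring hW hE hc g k))) ∈ W
    rw [perm₁OfColoring, coe_apply_conjSubtypePerm]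
    simpa [hE.partner_involutive _] using hW.partner_mem _
  · show s(partner E (g k), (g k : β)) ∈ E
    rw [Sym2.eq_swap]
    exact hE.partner_mem _

end OfColoring

abbrev LabelledTransitivePair (n : ℕ) (β : Type*) :=
  (Fin n × Fin 2 ≃ β) ×
    {p : Equiv.Perm (Fin n) × Equiv.Perm (Fin n) // TransitivePair p.1 p.2}

def LabelledTransitivePair.toPMap {n : ℕ} (a : LabelledTransitivePair n β) : PMap β :=
  toPMapF a.1 a.2.1.1 a.2.1.2

abbrev ColoredNumbering (n : ℕ) (M : PMap β) :=
  Σ c : {c // M.IsProperColoring c}, Fin n ≃ {x // c.1 x = true}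

def sideNumbering {ι : Type*} (f : ι × Fin 2 ≃ β) : ι ≃ {x // sideColor f x = true} where
  toFun k := ⟨f (k, 1), by simp [sideColor]⟩
  invFun x := (f.symm x).1
  left_inv k := by simp
  right_inv x := Subtype.ext <| by
    have h : (f.symm x).2 = 1 := by simpa [sideColor] using x.2
    conv_rhs => rw [← f.apply_symm_apply x, ← Prod.mk.eta (p := f.symm x), h]

section Fiber

variable {n : ℕ} {M : PMap β}

def coloredNumberingOfFiber (a : {a : LabelledTransitivePair n β // a.toPMap = M}) :
    ColoredNumbering n M :=
  ⟨⟨sideColor a.1.1, by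
    obtain ⟨a, rfl⟩ := a
    exact toPMapF_isProperColoring _ _ _⟩, sideNumbering a.1.1⟩

theorem coloredNumberingOfFiber_injective :
    Function.Injective (coloredNumberingOfFiber (n := n) (M := M)) := by
  rintro ⟨⟨f, ⟨σ₁, σ₂⟩, _⟩, rfl⟩ ⟨⟨f', ⟨σ₁', σ₂'⟩, _⟩, hM⟩ h
  replace hM : toPMapF f' σ₁' σ₂' = toPMapF f σ₁ σ₂ := hM
  have h1 (k : Fin n) : f' (k, 1) = f (k, 1) :=
    congrArg (fun t : ColoredNumbering n _ => (t.2 k).1) h.symm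
  have h0 (k : Fin n) : f' (k, 0) = f (k, 0) := by
    rw [← partner_toPMapF_E f' σ₁' σ₂', ← partner_toPMapF_E f σ₁ σ₂, hM, h1]
  obtain rfl : f = f' :=
    Equiv.ext fun ⟨k, i⟩ => by fin_cases i; exacts [(h0 k).symm, (h1 k).symm]
  have hσ₁ (k : Fin n) : σ₁' k = σ₁ k := by
    have h := partner_toPMapF_W f σ₁' σ₂' k
    rw [hM, partner_toPMapF_W] at h
    exact (congrArg Prod.fst (f.injective h)).symm
  have hσ₂ (k : Fin n) : σ₂' k = σ₂ k := by
    have h := partner_toPMapF_B f σ₁' σ₂' k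
    rw [hM, partner_toPMapF_B] at h
    exact (congrArg Prod.fst (f.injective h)).symm
  obtain rfl : σ₁' = σ₁ := Equiv.ext hσ₁
  obtain rfl : σ₂' = σ₂ := Equiv.ext hσ₂
  rfl

variable (hB : IsPairPartitionOn Set.univ M.B) (hW : IsPairPartitionOn Set.univ M.W)
  (hE : IsPairPartitionOn Set.univ M.E) (hX : M.X = Set.univ) (hconn : M.Connected)

def fiberOfColoredNumbering (t : ColoredNumbering n M) :
    {a : LabelledTransitivePair n β // a.toPMap = M} :=
  have h := toPMapF_labellingOfColoring hB hW hE t.1.2 t.2 hX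
  ⟨⟨labellingOfColoring hE t.1.2 t.2,
      ⟨(perm₁OfColoring hW hE t.1.2 t.2, perm₂OfColoring hB hE t.1.2 t.2),
        (toPMapF_connected_iff _).mp (h ▸ hconn)⟩⟩, h⟩

theorem fiberOfColoredNumbering_injective :
    Function.Injective (fiberOfColoredNumbering (n := n) hB hW hE hX hconn) := by
  rintro ⟨⟨c, hc⟩, g⟩ ⟨⟨c', hc'⟩, g'⟩ h
  have hf : labellingOfColoring hE hc g = labellingOfColoring hE hc' g' :=
    congrArg (fun a => a.1.1) h
  obtain rfl : c = c' := by
    rw [← sideColor_labellingOfColoring hE hc g, hf, sideColor_labellingOfColoring]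
  obtain rfl : g = g' := Equiv.ext fun k => Subtype.ext (congrArg (· (k, 1)) hf)
  rfl

end Fiber

theorem card_fiber_toPMap {n : ℕ} [Finite β] [Nonempty β] (hβ : Nat.card β = 2 * n)
    {M : PMap β} (hM : M.IsMap) (hX : M.X = Set.univ) (hconn : M.Connected)
    (hor : M.Orientable) :
    Nat.card {a : LabelledTransitivePair n β // a.toPMap = M} = 2 * n.factorial := by
  obtain ⟨hB, hW, hE⟩ := hM
  rw [hX] at hB hW hE
  calc Nat.card {a : LabelledTransitivePair n β // a.toPMap = M}
      = Nat.card (ColoredNumbering n M) :=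
        le_antisymm (Nat.card_le_card_of_injective _ coloredNumberingOfFiber_injective)
          (Nat.card_le_card_of_injective _ (fiberOfColoredNumbering_injective hB hW hE hX hconn))
    _ = Nat.card {c // M.IsProperColoring c} * n.factorial :=
      Nat.card_sigma_of_card_eq fun c => by
        have := c.2.card_eq_two_mul_card_true hE
        rw [Nat.card_equiv_of_card_eq (by rw [Nat.card_fin]; omega), Nat.card_fin]
    _ = 2 * n.factorial := by rw [PMap.card_properColorings hX hconn hor]

/-- Proposition 3.2: `(2n)!` times the number of pairs `(σ₁,σ₂)` of permutations
of `{1,…,n}` generating a transitive subgroup equals `2·n!` times the number of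
connected, orientable non-oriented maps `(B,W,E)` on the label set `{1,…,2n}`. -/
theorem edge_liberation_for_oriented_maps (n : ℕ) (hn : 1 ≤ n) :
    (2 * n).factorial *
      Nat.card {p : Equiv.Perm (Fin n) × Equiv.Perm (Fin n) //
        TransitivePair p.1 p.2}
    = 2 * n.factorial *
      Nat.card {M : PMap (Fin (2 * n)) //
        M.IsMap ∧ M.X = Set.univ ∧ M.Connected ∧ M.Orientable} := by
  have : Nonempty (Fin (2 * n)) := ⟨⟨0, by omega⟩⟩
  let toMap (a : LabelledTransitivePair n (Fin (2 * n))) : {M : PMap (Fin (2 * n)) //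
      M.IsMap ∧ M.X = Set.univ ∧ M.Connected ∧ M.Orientable} :=
    ⟨a.toPMap, toPMapF_isMap _ _ _, rfl, (toPMapF_connected_iff _).mpr a.2.2,
      toPMapF_orientable _ _ _⟩
  have hfiber (M : {M : PMap (Fin (2 * n)) //
      M.IsMap ∧ M.X = Set.univ ∧ M.Connected ∧ M.Orientable}) :
      Nat.card {a // toMap a = M} = 2 * n.factorial := by
    obtain ⟨M, hM, hX, hconn, hor⟩ := M
    rw [← card_fiber_toPMap (Nat.card_fin _) hM hX hconn hor]
    exact Nat.card_congr (Equiv.subtypeEquivRight fun a => Subtype.ext_iff)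
  have hlabel : Nat.card (Fin n × Fin 2 ≃ Fin (2 * n)) = (2 * n).factorial := by
    rw [Nat.card_equiv_of_card_eq (by simp [mul_comm]), Nat.card_prod, Nat.card_fin,
      Nat.card_fin, mul_comm]
  rw [← hlabel, ← Nat.card_prod, Nat.card_eq_card_mul_of_card_fiber toMap hfiber, mul_comm]

end
end

section
/- The conservative sum over non-oriented maps with one face of size 2n, multiplied by (2n−1)!, equals the liberal sum over non-oriented maps with one face, as formal linear combinations of unlabeled maps: equivalently, the number of triples (B',W',E') of pair-partitions of {1,...,2n} with L(B',W') a single 2n-gon and with underlying unlabeled map M equals (2n−1)! times the number of pairings E of the edge-sides of a fixed labeled 2n-gon yielding the unlabeled map M. -/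
open Classical

noncomputable section

variable {α : Type*} {β : Type*}

/-! Permutations of the edge-sides act on maps by relabelling. The liberal maps form the orbit
of `M₀`, and a conservative pairing `E` is the same as a map of that orbit whose corner pairings
are those of the standard polygon `L`. A one-face map on `2n` edge-sides is a relabelling of `L`
in exactly `2n` ways, one for each edge-side receiving the label `0`: the rest of the labelling
is forced by walking around the face, alternately across black and white corners. Counting the
pairs `(M, ρ)` with `ρ • L = (M.B, M.W)` in two ways gives `#liberal * 2n = (2n)! * #conservative`.
-/

open Set Function Relation

theorem IsPairPartitionOn.exists_partner {B : Set (Sym2 α)} (hB : IsPairPartitionOn univ B) :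
    ∃ b : α → α, Involutive b ∧ (∀ x, b x ≠ x) ∧ ∀ x y, s(x, y) ∈ B ↔ y = b x := by
  choose p hp hp_unique using fun x => hB.2 x (mem_univ x)
  choose b hb using fun x => Sym2.mem_iff_exists.mp (hp x).2
  have hmem : ∀ x y, s(x, y) ∈ B ↔ y = b x := fun x y =>
    ⟨fun h => Sym2.congr_right.mp ((hp_unique x _ ⟨h, Sym2.mem_mk_left x y⟩).trans (hb x)),
      fun h => h ▸ hb x ▸ (hp x).1⟩
  refine ⟨b, fun x => ?_, fun x hx => ?_, hmem⟩
  · exact ((hmem _ _).mp (Sym2.eq_swap ▸ (hmem x _).mpr rfl)).symm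
  · exact (hB.1 _ ((hmem x x).mpr hx.symm)).1 (Sym2.mk_isDiag_iff.mpr rfl)

theorem IsPairPartitionOn.image {X : Set α} {P : Set (Sym2 α)} (h : IsPairPartitionOn X P)
    (σ : Equiv.Perm α) : IsPairPartitionOn (σ '' X) (Sym2.map σ '' P) := by
  refine ⟨?_, ?_⟩
  · rintro _ ⟨p, hp, rfl⟩
    refine ⟨by rw [Sym2.isDiag_map σ.injective]; exact (h.1 p hp).1, fun x hx => ?_⟩
    obtain ⟨y, hy, rfl⟩ := Sym2.mem_map.mp hx
    exact mem_image_of_mem σ ((h.1 p hp).2 y hy)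
  · rintro _ ⟨x, hx, rfl⟩
    obtain ⟨p, ⟨hp, hxp⟩, hp_unique⟩ := h.2 x hx
    refine ⟨Sym2.map σ p, ⟨mem_image_of_mem _ hp, Sym2.mem_map.mpr ⟨x, hxp, rfl⟩⟩, ?_⟩
    rintro _ ⟨⟨q, hq, rfl⟩, hxq⟩
    obtain ⟨y, hy, hyx⟩ := Sym2.mem_map.mp hxq
    rw [hp_unique q ⟨hq, σ.injective hyx ▸ hy⟩]

theorem reach_image (σ : α → β) {S : Set (Sym2 α)} {x y : α} (h : reach S x y) :
    reach (Sym2.map σ '' S) (σ x) (σ y) := by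
  induction h with
  | refl => exact .refl
  | tail _ hadj ih =>
    obtain ⟨p, hp, hx, hy⟩ := hadj
    exact ih.tail ⟨Sym2.map σ p, mem_image_of_mem _ hp, Sym2.mem_map.mpr ⟨_, hx, rfl⟩,
      Sym2.mem_map.mpr ⟨_, hy, rfl⟩⟩

namespace PMap

theorem relabel_one (M : PMap α) : M.relabel 1 = M := by
  simp [relabel]

theorem relabel_mul (M : PMap α) (σ τ : Equiv.Perm α) :
    M.relabel (σ * τ) = (M.relabel τ).relabel σ := by
  simp only [relabel, Equiv.Perm.coe_mul, image_image, Sym2.map_map, ← Function.comp_def]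

instance : MulAction (Equiv.Perm α) (PMap α) where
  smul σ M := M.relabel σ
  one_smul := relabel_one
  mul_smul σ τ M := relabel_mul M σ τ

theorem smul_def (σ : Equiv.Perm α) (M : PMap α) : σ • M = M.relabel σ := rfl

theorem IsMap.smul {M : PMap α} (h : M.IsMap) (σ : Equiv.Perm α) : (σ • M).IsMap :=
  ⟨h.1.image σ, h.2.1.image σ, h.2.2.image σ⟩

theorem eq_smul_mk {M : PMap α} {X : Set α} {B W : Set (Sym2 α)} {ρ : Equiv.Perm α}
    (hX : M.X = ρ '' X) (hB : M.B = Sym2.map ρ '' B) (hW : M.W = Sym2.map ρ '' W) :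
    M = ρ • PMap.mk X B W (Sym2.map ρ.symm '' M.E) := by
  obtain ⟨X', B', W', E'⟩ := M
  simp only at hX hB hW
  simp [smul_def, relabel, hX, hB, hW, image_image, Sym2.map_map]

theorem smul_X_eq_univ {M : PMap α} (hX : M.X = univ) (σ : Equiv.Perm α) :
    (σ • M).X = univ :=
  (congrArg (σ '' ·) hX).trans (image_univ_of_surjective σ.surjective)

theorem X_eq_image_of_mem_orbit {M₀ M : PMap α} (hX : M₀.X = univ)
    (hM : M ∈ MulAction.orbit (Equiv.Perm α) M₀) (ρ : Equiv.Perm α) : M.X = ρ '' univ := by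
  obtain ⟨σ, rfl⟩ := hM
  rw [smul_X_eq_univ hX, image_univ_of_surjective ρ.surjective]

end PMap

theorem OnePolygon.smul {M : PMap α} (h : OnePolygon M) (σ : Equiv.Perm α) :
    OnePolygon (σ • M) := by
  rintro _ ⟨x, hx, rfl⟩ _ ⟨y, hy, rfl⟩
  have hBW : (σ • M).B ∪ (σ • M).W = Sym2.map σ '' (M.B ∪ M.W) := (image_union _ _ _).symm
  rw [hBW]
  exact reach_image σ (h x hx y hy)

theorem sameUnlabeled_iff_mem_orbit {M M' : PMap α} :
    SameUnlabeled M M' ↔ M' ∈ MulAction.orbit (Equiv.Perm α) M :=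
  exists_congr fun _ => eq_comm

section AltWalk

variable (b w : α → α)

def altStep (m : ℕ) : α → α := if Even m then b else w

/-- The walk around a face from `x₀`, crossing a black corner (`b`) after an even number of steps
and a white corner (`w`) after an odd number. -/
def altWalk (x₀ : α) : ℕ → α
  | 0 => x₀
  | m + 1 => altStep b w m (altWalk x₀ m)

variable {b w} {x₀ : α}

theorem altWalk_succ (m : ℕ) : altWalk b w x₀ (m + 1) = altStep b w m (altWalk b w x₀ m) := rfl

theorem altStep_add_two_mul (m r : ℕ) : altStep b w (m + 2 * r) = altStep b w m := by
  simp [altStep, Nat.even_add]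

theorem altStep_succ (m : ℕ) : altStep b w (m + 1) = if Even m then w else b := by
  by_cases h : Even m <;> simp [altStep, h, Nat.even_add_one]

variable (hb : Involutive b) (hw : Involutive w)
include hb hw

theorem altStep_involutive (m : ℕ) : Involutive (altStep b w m) := by
  unfold altStep; split_ifs <;> assumption

theorem altStep_altWalk_succ (m : ℕ) : altStep b w m (altWalk b w x₀ (m + 1)) = altWalk b w x₀ m :=
  altStep_involutive hb hw m _

/-- Folding the walk from both ends: `a i = a (i + 2r + 1)` gives `a (i + 1) = a (i + 2r)`, and
finally a fixed point of `b` or `w`. -/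
theorem altWalk_ne_add_odd (hb' : ∀ x, b x ≠ x) (hw' : ∀ x, w x ≠ x) (i r : ℕ) :
    altWalk b w x₀ i ≠ altWalk b w x₀ (i + 2 * r + 1) := by
  induction r generalizing i with
  | zero =>
    intro h
    have : altStep b w i (altWalk b w x₀ i) ≠ altWalk b w x₀ i := by
      unfold altStep; split_ifs; exacts [hb' _, hw' _]
    exact this h.symm
  | succ r ih =>
    intro h
    apply ih (i + 1)
    calc altWalk b w x₀ (i + 1)
        = altStep b w (i + 2 * (r + 1)) (altWalk b w x₀ (i + 2 * (r + 1) + 1)) := by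
          rw [altWalk_succ, h, altStep_add_two_mul]
      _ = altWalk b w x₀ (i + 1 + 2 * r + 1) := by
          rw [altStep_altWalk_succ hb hw]; ring_nf

theorem altWalk_periodic_of_eq {i d : ℕ} (h : altWalk b w x₀ i = altWalk b w x₀ (i + 2 * d)) :
    Periodic (altWalk b w x₀) (2 * d) := by
  have h₀ : altWalk b w x₀ 0 = altWalk b w x₀ (2 * d) := by
    induction i with
    | zero => simpa using h
    | succ i ih =>
      apply ih
      rw [← altStep_altWalk_succ hb hw i, h, ← altStep_add_two_mul i d, add_right_comm,
        altStep_altWalk_succ hb hw]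
  intro m
  induction m with
  | zero => simpa using h₀.symm
  | succ m ih => rw [add_right_comm, altWalk_succ, ih, altStep_add_two_mul, altWalk_succ]

theorem exists_altWalk_periodic [Fintype α] (hb' : ∀ x, b x ≠ x) (hw' : ∀ x, w x ≠ x) :
    ∃ d, 0 < d ∧ 2 * d ≤ Fintype.card α ∧ Periodic (altWalk b w x₀) (2 * d) := by
  obtain ⟨i, j, hij, heq⟩ := Fintype.exists_ne_map_eq_of_card_lt
    (fun i : Fin (Fintype.card α + 1) => altWalk b w x₀ i) (by simp)
  wlog hlt : i < j generalizing i j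
  · exact this j i hij.symm heq.symm (lt_of_le_of_ne (not_lt.mp hlt) hij.symm)
  have hj := j.isLt
  obtain ⟨e, he⟩ := Nat.exists_eq_add_of_le (Fin.lt_def.mp hlt).le
  rcases Nat.even_or_odd' e with ⟨d, rfl | rfl⟩
  · exact ⟨d, by omega, by omega, altWalk_periodic_of_eq hb hw (he ▸ heq)⟩
  · exact (altWalk_ne_add_odd hb hw hb' hw' i d (he ▸ heq)).elim

theorem altWalk_surjective {p : ℕ} (hp : 0 < p) (hper : Periodic (altWalk b w x₀) p)
    (hgen : ∀ y, ReflTransGen (fun x y => y = b x ∨ y = w x) x₀ y) :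
    Surjective (altWalk b w x₀) := by
  intro y
  induction hgen y with
  | refl => exact ⟨0, rfl⟩
  | tail _ hstep ih =>
    obtain ⟨m, rfl⟩ := ih
    obtain ⟨k, rfl⟩ : ∃ k, p = k + 1 := ⟨p - 1, by omega⟩
    have hy : altWalk b w x₀ (m + k + 1) = altWalk b w x₀ m := by rw [add_assoc]; exact hper m
    have hback := altStep_altWalk_succ (x₀ := x₀) hb hw (m + k)
    have hfwd := altWalk_succ (b := b) (w := w) (x₀ := x₀) (m + k + 1)
    rw [hy] at hback hfwd
    rw [altStep_succ] at hfwd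
    unfold altStep at hback
    rcases hstep with rfl | rfl <;> split_ifs at hback hfwd <;>
      first | exact ⟨_, hback.symm⟩ | exact ⟨_, hfwd⟩

theorem altWalk_periodic_and_bijective [Fintype α] {n : ℕ} (hcard : Fintype.card α = 2 * n)
    (hb' : ∀ x, b x ≠ x) (hw' : ∀ x, w x ≠ x)
    (hgen : ∀ y, ReflTransGen (fun x y => y = b x ∨ y = w x) x₀ y) :
    Periodic (altWalk b w x₀) (2 * n) ∧ Bijective fun k : Fin (2 * n) => altWalk b w x₀ k := by
  obtain ⟨d, hd, hdn, hper⟩ := exists_altWalk_periodic (x₀ := x₀) hb hw hb' hw'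
  have hsurj : Surjective fun k : Fin (2 * d) => altWalk b w x₀ k := by
    intro y
    obtain ⟨m, rfl⟩ := altWalk_surjective hb hw (by omega) hper hgen y
    exact ⟨⟨m % (2 * d), Nat.mod_lt _ (by omega)⟩, hper.map_mod_nat m⟩
  obtain rfl : d = n := by
    have := Fintype.card_le_of_surjective _ hsurj
    simp only [Fintype.card_fin] at this
    omega
  exact ⟨hper, (Fintype.bijective_iff_surjective_and_card _).mpr ⟨hsurj, by simp [hcard]⟩⟩

end AltWalk

theorem reflTransGen_of_reach_union {B W : Set (Sym2 α)} {b w : α → α}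
    (hB : ∀ x y, s(x, y) ∈ B ↔ y = b x) (hW : ∀ x y, s(x, y) ∈ W ↔ y = w x) {x y : α}
    (h : reach (B ∪ W) x y) : ReflTransGen (fun x y => y = b x ∨ y = w x) x y := by
  induction h with
  | refl => exact .refl
  | tail _ hadj ih =>
    obtain ⟨p, hp, hu, hv⟩ := hadj
    obtain ⟨z, rfl⟩ := Sym2.mem_iff_exists.mp hu
    rcases Sym2.mem_iff.mp hv with rfl | rfl
    · exact ih
    · refine ih.tail ?_
      rcases hp with hp | hp
      exacts [Or.inl ((hB _ _).mp hp), Or.inr ((hW _ _).mp hp)]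

theorem val_finRotate {N : ℕ} (k : Fin N) : (finRotate N k).val = (k.val + 1) % N := by
  have := k.neZero
  rw [finRotate_apply, Fin.val_add, Fin.val_one', Nat.add_mod_mod]

theorem even_val_finRotate_iff {n : ℕ} (k : Fin (2 * n)) :
    Even (finRotate (2 * n) k).val ↔ ¬ Even k.val := by
  rw [val_finRotate, Nat.even_iff, Nat.mod_mod_of_dvd _ (dvd_mul_right 2 n), ← Nat.even_iff,
    Nat.even_add_one]

theorem image_polygon_eq_iff {N : ℕ} {P : Fin N → Prop} (hP : ∀ k, P (finRotate N k) ↔ ¬ P k)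
    {B : Set (Sym2 α)} {b : α → α} (hb : Involutive b) (hB : ∀ x y, s(x, y) ∈ B ↔ y = b x)
    (ρ : Fin N ≃ α) :
    Sym2.map ρ '' {p | ∃ k, P k ∧ p = s(k, finRotate N k)} = B ↔
      ∀ k, P k → ρ (finRotate N k) = b (ρ k) := by
  constructor
  · intro h k hk
    rw [← hB, ← h]
    exact ⟨_, ⟨k, hk, rfl⟩, Sym2.map_mk _ _ _⟩
  · intro h
    ext p
    induction p using Sym2.ind with | _ x y => ?_
    constructor
    · rintro ⟨_, ⟨k, hk, rfl⟩, hp⟩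
      rw [← hp, Sym2.map_mk, hB]
      exact h k hk
    · rw [hB]
      rintro rfl
      obtain ⟨k, rfl⟩ := ρ.surjective x
      by_cases hk : P k
      · exact ⟨_, ⟨k, hk, rfl⟩, by rw [Sym2.map_mk, h k hk]⟩
      · obtain ⟨j, rfl⟩ := (finRotate N).surjective k
        have hj : P j := not_not.mp ((hP j).not.mp hk)
        refine ⟨_, ⟨j, hj, rfl⟩, ?_⟩
        rw [Sym2.map_mk, h j hj, hb, Sym2.eq_swap]

theorem image_polygon_eq_iff_walk {n : ℕ} {B W : Set (Sym2 α)} {b w : α → α}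
    (hb : Involutive b) (hw : Involutive w)
    (hB : ∀ x y, s(x, y) ∈ B ↔ y = b x) (hW : ∀ x y, s(x, y) ∈ W ↔ y = w x)
    (ρ : Fin (2 * n) ≃ α) :
    (Sym2.map ρ '' polygonB n = B ∧ Sym2.map ρ '' polygonW n = W) ↔
      ∀ k, ρ (finRotate (2 * n) k) = altStep b w k (ρ k) := by
  rw [polygonB, polygonW,
    image_polygon_eq_iff (P := fun k => Even k.val) even_val_finRotate_iff hb hB,
    image_polygon_eq_iff (P := fun k => ¬ Even k.val)
      (fun k => by rw [even_val_finRotate_iff]) hw hW]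
  simp only [altStep]
  constructor
  · rintro ⟨hEven, hOdd⟩ k
    split_ifs with hk
    exacts [hEven k hk, hOdd k hk]
  · intro h
    exact ⟨fun k hk => by simpa [hk] using h k, fun k hk => by simpa [hk] using h k⟩

theorem altWalk_finRotate {b w : α → α} {x₀ : α} {N : ℕ} (hper : Periodic (altWalk b w x₀) N)
    (k : Fin N) :
    altWalk b w x₀ (finRotate N k) = altStep b w k (altWalk b w x₀ k) := by
  rw [val_finRotate, hper.map_mod_nat, altWalk_succ]

theorem eq_altWalk_of_forall_finRotate {b w : α → α} {N : ℕ} [NeZero N] {ρ : Fin N → α}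
    (h : ∀ k, ρ (finRotate N k) = altStep b w k (ρ k)) (k : Fin N) :
    ρ k = altWalk b w (ρ 0) k := by
  obtain ⟨m, hm⟩ := k
  induction m with
  | zero => rfl
  | succ m ih =>
    have hrot : finRotate N ⟨m, by omega⟩ = ⟨m + 1, hm⟩ :=
      Fin.ext (by rw [val_finRotate, Nat.mod_eq_of_lt hm])
    rw [← hrot, h, ih (by omega), hrot]
    rfl

theorem nonempty_polygonLabelings_equiv [Fintype α] {n : ℕ} [NeZero n]
    (hcard : Fintype.card α = 2 * n) {B W : Set (Sym2 α)} (hB : IsPairPartitionOn univ B)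
    (hW : IsPairPartitionOn univ W) (hconn : ∀ x y, reach (B ∪ W) x y) :
    Nonempty ({ρ : Fin (2 * n) ≃ α //
      Sym2.map ρ '' polygonB n = B ∧ Sym2.map ρ '' polygonW n = W} ≃ α) := by
  obtain ⟨b, hb, hb', hbB⟩ := hB.exists_partner
  obtain ⟨w, hw, hw', hwW⟩ := hW.exists_partner
  have hwalk x₀ := altWalk_periodic_and_bijective hb hw hcard hb' hw'
    fun y => reflTransGen_of_reach_union hbB hwW (hconn x₀ y)
  have hlabel := image_polygon_eq_iff_walk (n := n) hb hw hbB hwW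
  exact ⟨{
    toFun := fun ρ => ρ.1 0
    invFun := fun x₀ => ⟨Equiv.ofBijective _ (hwalk x₀).2,
      (hlabel _).mpr (altWalk_finRotate (hwalk x₀).1)⟩
    left_inv := fun ρ => Subtype.ext <| Equiv.ext fun k =>
      (eq_altWalk_of_forall_finRotate ((hlabel ρ.1).mp ρ.2) k).symm
    right_inv := fun _ => rfl }⟩

open MulAction

theorem liberal_iff_mem_orbit {M₀ : PMap α} (hM₀ : M₀.IsMap) (hX : M₀.X = univ)
    (hface : OnePolygon M₀) (M : PMap α) :
    (M.IsMap ∧ M.X = univ ∧ OnePolygon M ∧ SameUnlabeled M M₀) ↔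
      M ∈ orbit (Equiv.Perm α) M₀ := by
  constructor
  · rintro ⟨-, -, -, hsame⟩
    exact mem_orbit_symm.mp (sameUnlabeled_iff_mem_orbit.mp hsame)
  · rintro ⟨σ, rfl⟩
    exact ⟨hM₀.smul σ, PMap.smul_X_eq_univ hX σ, hface.smul σ,
      sameUnlabeled_iff_mem_orbit.mpr (mem_orbit_smul σ M₀)⟩

theorem conservative_iff_mem_orbit {n : ℕ} {M₀ : PMap (Fin (2 * n))} (hM₀ : M₀.IsMap)
    (E : Set (Sym2 (Fin (2 * n)))) :
    (IsPairPartitionOn univ E ∧ SameUnlabeled (PMap.mk univ (polygonB n) (polygonW n) E) M₀) ↔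
      PMap.mk univ (polygonB n) (polygonW n) E ∈ orbit (Equiv.Perm (Fin (2 * n))) M₀ := by
  constructor
  · exact fun ⟨_, hsame⟩ => mem_orbit_symm.mp (sameUnlabeled_iff_mem_orbit.mp hsame)
  · intro hmem
    refine ⟨?_, sameUnlabeled_iff_mem_orbit.mpr (mem_orbit_symm.mp hmem)⟩
    obtain ⟨σ, hσ : σ • M₀ = _⟩ := hmem
    have hE := (hM₀.smul σ).2.2
    rwa [hσ] at hE

def labeledOrbitEquiv {n : ℕ} {M₀ : PMap (Fin (2 * n))} (hX : M₀.X = univ) :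
    (Σ M : orbit (Equiv.Perm (Fin (2 * n))) M₀, {ρ : Equiv.Perm (Fin (2 * n)) //
      Sym2.map ρ '' polygonB n = M.1.B ∧ Sym2.map ρ '' polygonW n = M.1.W}) ≃
    Equiv.Perm (Fin (2 * n)) × {E : Set (Sym2 (Fin (2 * n))) //
      PMap.mk univ (polygonB n) (polygonW n) E ∈ orbit (Equiv.Perm (Fin (2 * n))) M₀} where
  toFun := fun ⟨M, ρ⟩ => (ρ, ⟨Sym2.map ρ.1.symm '' M.1.E, by
    rw [← inv_smul_eq_iff.mpr (PMap.eq_smul_mk (PMap.X_eq_image_of_mem_orbit hX M.2 ρ)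
      ρ.2.1.symm ρ.2.2.symm)]
    exact mem_orbit_of_mem_orbit _ M.2⟩)
  invFun := fun ⟨ρ, E⟩ => ⟨⟨ρ • PMap.mk univ (polygonB n) (polygonW n) E.1,
    mem_orbit_of_mem_orbit ρ E.2⟩, ⟨ρ, rfl, rfl⟩⟩
  left_inv := fun ⟨M, ρ⟩ => Sigma.subtype_ext (Subtype.ext (PMap.eq_smul_mk
    (PMap.X_eq_image_of_mem_orbit hX M.2 ρ) ρ.2.1.symm ρ.2.2.symm).symm) rfl
  right_inv := fun ⟨ρ, E⟩ => Prod.ext rfl (Subtype.ext (congrArg PMap.E (inv_smul_smul ρ _)))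

/-- Proposition 1.8 (conservative versus liberal summation): for every map `M₀`
with one face, the number of triples `(B',W',E')` of pair-partitions of
`{1,…,2n}` with `L(B',W')` a single polygon and with underlying unlabeled map
equal to that of `M₀` equals `(2n−1)!` times the number of pairings `E` of the
edge-sides of the fixed labeled `2n`-gon whose resulting map has the same
underlying unlabeled map as `M₀`. -/
theorem conservative_vs_liberal (n : ℕ) (hn : 1 ≤ n) (M₀ : PMap (Fin (2 * n)))
    (hM₀ : M₀.IsMap) (hX : M₀.X = Set.univ) (hface : OnePolygon M₀) :
    Nat.card {M : PMap (Fin (2 * n)) //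
        M.IsMap ∧ M.X = Set.univ ∧ OnePolygon M ∧ SameUnlabeled M M₀}
    = (2 * n - 1).factorial *
      Nat.card {E : Set (Sym2 (Fin (2 * n))) //
        IsPairPartitionOn Set.univ E ∧
        SameUnlabeled (PMap.mk Set.univ (polygonB n) (polygonW n) E) M₀} := by
  have : NeZero n := ⟨by omega⟩
  have hlabelings (M : orbit (Equiv.Perm (Fin (2 * n))) M₀) :
      Nonempty ({ρ : Equiv.Perm (Fin (2 * n)) //
        Sym2.map ρ '' polygonB n = M.1.B ∧ Sym2.map ρ '' polygonW n = M.1.W} ≃ Fin (2 * n)) := by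
    obtain ⟨hM, hMX, hMface, -⟩ := (liberal_iff_mem_orbit hM₀ hX hface M.1).mpr M.2
    refine nonempty_polygonLabelings_equiv (Fintype.card_fin _) (hMX ▸ hM.1) (hMX ▸ hM.2.1) ?_
    exact fun x y => hMface x (hMX ▸ mem_univ x) y (hMX ▸ mem_univ y)
  have hcount : Nat.card (orbit (Equiv.Perm (Fin (2 * n))) M₀) * (2 * n) =
      (2 * n).factorial * Nat.card {E : Set (Sym2 (Fin (2 * n))) //
        PMap.mk univ (polygonB n) (polygonW n) E ∈ orbit (Equiv.Perm (Fin (2 * n))) M₀} := by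
    simpa [Fintype.card_perm] using Nat.card_congr
      ((Equiv.sigmaEquivProdOfEquiv fun M => (hlabelings M).some).symm.trans
        (labeledOrbitEquiv hX))
  rw [Nat.card_congr (Equiv.subtypeEquivRight (liberal_iff_mem_orbit hM₀ hX hface)),
    Nat.card_congr (Equiv.subtypeEquivRight (conservative_iff_mem_orbit hM₀))]
  apply Nat.eq_of_mul_eq_mul_right (show 0 < 2 * n by omega)
  rw [hcount, ← Nat.mul_factorial_pred (show 2 * n ≠ 0 by omega)]
  ring

end
end
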